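/- arXiv:1705.07577 — 2 statements merged into one kernel-verified Lean document; each statement's English description precedes it below -/
import Mathlib

section
/- Let c* > 0 be a constant. If k(n) = n/(log n)³ and m(n) = (log n)^{1/2}/√(2c*), then n · Σ_{l=2}^{m(n)} ( (2 c* k(n) m(n)² )/(n l) )^{l−1} · (2 c* m(n)²)/(e^l √l) → 0 as n → ∞; in particular the variance bound Σ_{l=2}^{m} C(m−1,l−1)² c^l k^{l−1} / C(n,l) is o(1/n) · o(1) — i.e., it is o(n^{−1}) suitably interpreted, so the higher-order U-statistic terms contribute variance of order o(1/n). -/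
/-!
Write `L = log n` and `m = √L / √(2c*)`, so that `2c* m² = L` and `2c* k m² = n / L²`. The
`l`-th summand then becomes `(L² l)^{-(l-1)} · L / (e^l √l)`, which is at most `L⁻² · L = L⁻¹`
for `l ≥ 2` and `L ≥ 1`. There are at most `m` summands, so the sum is at most
`m / L = 1 / (√(2c*) √L)`, which tends to `0`.
-/

open Real Filter Topology Finset

lemma one_le_log_natCast {n : ℕ} (hn : 3 ≤ n) : 1 ≤ log n := by
  rw [le_log_iff_exp_le (by positivity)]
  calc exp 1 ≤ 3 := (exp_one_lt_d9.trans (by norm_num)).le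
    _ ≤ n := by exact_mod_cast hn

lemma tendsto_inv_sqrt_log_natCast :
    Tendsto (fun n : ℕ => (√(log n))⁻¹) atTop (𝓝 0) :=
  (tendsto_sqrt_atTop.comp (tendsto_log_atTop.comp tendsto_natCast_atTop_atTop)).inv_tendsto_atTop

lemma summand_eq_pow_mul_div_exp_pow {cs L x : ℝ} (hcs : 0 < cs) (hL : 0 ≤ L) (hx : x ≠ 0) (l : ℕ) :
    ((2 * cs * (x / L ^ 3) * (√L / √(2 * cs)) ^ 2) / (x * l)) ^ (l - 1) *
        ((2 * cs * (√L / √(2 * cs)) ^ 2) / (exp 1 ^ l * √l)) =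
      (1 / (L ^ 2 * l)) ^ (l - 1) * (L / (exp 1 ^ l * √l)) := by
  have hm : (√L / √(2 * cs)) ^ 2 = L / (2 * cs) := by
    rw [div_pow, sq_sqrt hL, sq_sqrt (by positivity)]
  have hcs2 : 2 * cs ≠ 0 := by positivity
  rw [hm, mul_div_cancel₀ L hcs2]
  congr 2
  rcases hL.eq_or_lt with rfl | hL
  · simp
  rcases (Nat.cast_nonneg (α := ℝ) l).eq_or_lt with hl | hl
  · simp [← hl]
  field_simp

lemma pow_mul_div_exp_pow_le_inv {L : ℝ} (hL : 1 ≤ L) {l : ℕ} (hl : 2 ≤ l) :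
    (1 / (L ^ 2 * l)) ^ (l - 1) * (L / (exp 1 ^ l * √l)) ≤ 1 / L := by
  have hl' : (2 : ℝ) ≤ l := by exact_mod_cast hl
  have hL2 : 1 ≤ L ^ 2 := one_le_pow₀ hL
  have hbase : (1 / (L ^ 2 * l)) ^ (l - 1) ≤ 1 / L ^ 2 :=
    calc (1 / (L ^ 2 * l)) ^ (l - 1) ≤ (1 / L ^ 2) ^ (l - 1) := by
          gcongr
          nlinarith
      _ ≤ (1 / L ^ 2) ^ 1 :=
          pow_le_pow_of_le_one (by positivity) (div_le_one_of_le₀ hL2 (by positivity)) (by omega)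
      _ = 1 / L ^ 2 := pow_one _
  have hdenom : 1 ≤ exp 1 ^ l * √l :=
    one_le_mul_of_one_le_of_one_le (one_le_pow₀ (one_le_exp zero_le_one))
      (one_le_sqrt.2 (by linarith))
  calc (1 / (L ^ 2 * l)) ^ (l - 1) * (L / (exp 1 ^ l * √l)) ≤ 1 / L ^ 2 * L :=
        mul_le_mul hbase (div_le_self (by linarith) hdenom) (by positivity) (by positivity)
    _ = 1 / L := by field_simp

lemma sum_Icc_two_floor_le {f : ℕ → ℝ} {x B : ℝ} (hx : 0 ≤ x) (hB : 0 ≤ B)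
    (hf : ∀ l ∈ Icc 2 ⌊x⌋₊, f l ≤ B) : ∑ l ∈ Icc 2 ⌊x⌋₊, f l ≤ x * B :=
  calc ∑ l ∈ Icc 2 ⌊x⌋₊, f l ≤ #(Icc 2 ⌊x⌋₊) • B := sum_le_card_nsmul _ _ _ hf
    _ = #(Icc 2 ⌊x⌋₊) * B := nsmul_eq_mul _ _
    _ ≤ x * B := by
        gcongr
        calc (#(Icc 2 ⌊x⌋₊) : ℝ) ≤ ⌊x⌋₊ := by
              exact_mod_cast (Nat.card_Icc 2 ⌊x⌋₊).trans_le (by omega)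
          _ ≤ x := Nat.floor_le hx

/-- with `k(n) = n/(log n)³` and `m(n) = (log n)^{1/2}/√(2c*)`, the
variance bound `n · (1/n) Σ_{l=2}^{m(n)} ((2c* k(n) m(n)²)/(n l))^{l−1} (2c* m(n)²)/(e^l √l)`
tends to `0` as `n → ∞`. -/
theorem stmt15 (cs : ℝ) (hcs : 0 < cs) :
    Filter.Tendsto
      (fun n : ℕ =>
        (n : ℝ) *
          ((1 / (n : ℝ)) *
            ∑ l ∈ Finset.Icc 2 ⌊Real.sqrt (Real.log n) / Real.sqrt (2 * cs)⌋₊,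
              ((2 * cs * ((n : ℝ) / (Real.log n) ^ 3) *
                    (Real.sqrt (Real.log n) / Real.sqrt (2 * cs)) ^ 2) /
                  ((n : ℝ) * l)) ^ (l - 1) *
                ((2 * cs * (Real.sqrt (Real.log n) / Real.sqrt (2 * cs)) ^ 2) /
                  (Real.exp 1 ^ l * Real.sqrt l))))
      Filter.atTop (nhds 0) := by
  refine (tendsto_congr' (f₂ := fun n : ℕ => ∑ l ∈ Icc 2 ⌊√(log n) / √(2 * cs)⌋₊,
      (1 / (log n ^ 2 * l)) ^ (l - 1) * (log n / (exp 1 ^ l * √l))) ?_).2 ?_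
  · filter_upwards [eventually_ge_atTop 1] with n hn
    have hn0 : (n : ℝ) ≠ 0 := by positivity
    rw [← mul_assoc, mul_one_div_cancel hn0, one_mul]
    exact sum_congr rfl fun l _ => summand_eq_pow_mul_div_exp_pow hcs (log_natCast_nonneg n) hn0 l
  have hbound : Tendsto (fun n : ℕ => (√(2 * cs))⁻¹ * (√(log n))⁻¹) atTop (𝓝 0) := by
    simpa using tendsto_inv_sqrt_log_natCast.const_mul (√(2 * cs))⁻¹
  refine squeeze_zero' ?_ ?_ hbound
  · filter_upwards [eventually_ge_atTop 3] with n h3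
    have hL := one_le_log_natCast h3
    exact sum_nonneg fun l _ => by positivity
  · filter_upwards [eventually_ge_atTop 3] with n h3
    have hL := one_le_log_natCast h3
    calc _ ≤ √(log n) / √(2 * cs) * (1 / log n) :=
          sum_Icc_two_floor_le (by positivity) (by positivity)
            fun l hl => pow_mul_div_exp_pow_le_inv hL (mem_Icc.1 hl).1
      _ = (√(2 * cs))⁻¹ * (√(log n))⁻¹ := by
          have hsL := mul_self_sqrt (zero_le_one.trans hL)
          have : 0 < √(log n) := sqrt_pos.2 (by linarith)
          field_simp
          linear_combination hsL
end

section
/- Under assumptions Ai)–Aiv) (double robustness structure), for any θ ∈ Θ and any functions b*, p* : [0,1]^d → ℝ, E_θ[H(b*, p*)] − E_θ[H(b,p)] = (−1)^{I(h₁(W) ≤ 0)} ∫ (b − b*)(x)(p − p*)(x) g(x) dx, where H(b,p) = b(X)p(X)H₁ + b(X)H₂ + p(X)H₃ + H₄; in particular E_θ[H(b*,p)] = E_θ[H(b,p*)] = E_θ[H(b,p)] = ψ(θ). -/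
open MeasureTheory

private lemma key_zero {d : ℕ} {α : Type*} [mα : MeasurableSpace α] (μ : Measure α)
    [IsProbabilityMeasure μ]
    (X : α → (Fin d → ℝ)) (hX : Measurable X) (φ : (Fin d → ℝ) → ℝ) (hφ : Measurable φ)
    (Y : α → ℝ) (hY : Integrable Y μ) (hint : Integrable (fun ω => φ (X ω) * Y ω) μ)
    (hm : μ[Y | MeasurableSpace.comap X inferInstance] =ᵐ[μ] 0) :
    ∫ ω, φ (X ω) * Y ω ∂μ = 0 := by
  set m := MeasurableSpace.comap X inferInstance with hmdef
  have hle : m ≤ mα := hX.comap_le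
  have hsm : StronglyMeasurable[m] (fun ω => φ (X ω)) :=
    (hφ.comp (Measurable.of_comap_le le_rfl)).stronglyMeasurable
  have h1 := condExp_mul_of_stronglyMeasurable_left hsm hint hY
  have h2 : ((fun ω => φ (X ω)) * μ[Y|m]) =ᵐ[μ] 0 := by
    filter_upwards [hm] with ω hω
    simp [Pi.mul_apply, hω]
  have h3 := integral_condExp (μ := μ) (f := (fun ω => φ (X ω)) * Y) hle
  have h4 : ∫ ω, (μ[(fun ω => φ (X ω)) * Y|m]) ω ∂μ = 0 := by
    rw [integral_congr_ae (h1.trans h2)]; simp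
  have h5 : ∫ ω, ((fun ω => φ (X ω)) * Y) ω ∂μ = 0 := h3 ▸ h4
  simpa using h5

/-- double robustness.  With `H(b,p) = b(X)p(X)H₁ + b(X)H₂ + p(X)H₃ + H₄`,
`h₁` of constant sign (`eps = ±1` accordingly), and the conditional moment conditions
`E[H₁b(X) + H₃ | X] = 0`, `E[H₁p(X) + H₂ | X] = 0`, one has for any `b*, p*`:
`E[H(b*,p*)] − E[H(b,p)] = (−1)^{I(h₁ ≤ 0)} ∫ (b−b*)(p−p*) g`, where the last
integral `∫ (b−b*)(x)(p−p*)(x) g(x) dx` (with `g(x) = E[|H₁| | X=x] f(x)`) is written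
equivalently as `E[(b−b*)(X)(p−p*)(X)|H₁|]`; in particular
`E[H(b*,p)] = E[H(b,p*)] = E[H(b,p)]`. -/
theorem stmt17 {d : ℕ} {α : Type*} [MeasurableSpace α] (μ : Measure α)
    [IsProbabilityMeasure μ]
    (X : α → (Fin d → ℝ)) (hX : Measurable X)
    (H1 H2 H3 H4 : α → ℝ) (hH1 : Measurable H1) (hH2 : Measurable H2)
    (hH3 : Measurable H3) (hH4 : Measurable H4)
    (b p bs ps : (Fin d → ℝ) → ℝ) (hb : Measurable b) (hp : Measurable p)
    (hbs : Measurable bs) (hps : Measurable ps)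
    (eps : ℝ)
    (heps : (eps = 1 ∧ ∀ ω, 0 ≤ H1 ω) ∨ (eps = -1 ∧ ∀ ω, H1 ω ≤ 0))
    -- integrability of all relevant terms
    (hint1 : ∀ b' ∈ ({b, bs} : Set ((Fin d → ℝ) → ℝ)), ∀ p' ∈ ({p, ps} : Set ((Fin d → ℝ) → ℝ)),
      Integrable (fun ω => b' (X ω) * p' (X ω) * H1 ω) μ)
    (hint2 : ∀ b' ∈ ({b, bs} : Set ((Fin d → ℝ) → ℝ)), Integrable (fun ω => b' (X ω) * H2 ω) μ)
    (hint3 : ∀ p' ∈ ({p, ps} : Set ((Fin d → ℝ) → ℝ)), Integrable (fun ω => p' (X ω) * H3 ω) μ)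
    (hint4 : Integrable H4 μ)
    (hint5 : Integrable (fun ω => H1 ω * p (X ω)) μ)
    (hint6 : Integrable (fun ω => H1 ω * b (X ω)) μ)
    (hint7 : Integrable H2 μ) (hint8 : Integrable H3 μ)
    -- the conditional moment restrictions defining `b` and `p`
    (hmb : μ[fun ω => H1 ω * b (X ω) + H3 ω | MeasurableSpace.comap X inferInstance]
      =ᵐ[μ] 0)
    (hmp : μ[fun ω => H1 ω * p (X ω) + H2 ω | MeasurableSpace.comap X inferInstance]
      =ᵐ[μ] 0) :
    ((∫ ω, (bs (X ω) * ps (X ω) * H1 ω + bs (X ω) * H2 ω + ps (X ω) * H3 ω + H4 ω) ∂μ) -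
        ∫ ω, (b (X ω) * p (X ω) * H1 ω + b (X ω) * H2 ω + p (X ω) * H3 ω + H4 ω) ∂μ) =
      eps * ∫ ω, (b (X ω) - bs (X ω)) * (p (X ω) - ps (X ω)) * |H1 ω| ∂μ ∧
    (∫ ω, (bs (X ω) * p (X ω) * H1 ω + bs (X ω) * H2 ω + p (X ω) * H3 ω + H4 ω) ∂μ) =
      ∫ ω, (b (X ω) * p (X ω) * H1 ω + b (X ω) * H2 ω + p (X ω) * H3 ω + H4 ω) ∂μ ∧
    (∫ ω, (b (X ω) * ps (X ω) * H1 ω + b (X ω) * H2 ω + ps (X ω) * H3 ω + H4 ω) ∂μ) =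
      ∫ ω, (b (X ω) * p (X ω) * H1 ω + b (X ω) * H2 ω + p (X ω) * H3 ω + H4 ω) ∂μ := by
  -- abbreviations
  have hmem : ∀ f : (Fin d → ℝ) → ℝ, f ∈ ({f, bs} : Set ((Fin d → ℝ) → ℝ)) := by
    intro f; left; rfl
  have hYp : Integrable (fun ω => H1 ω * p (X ω) + H2 ω) μ := hint5.add hint7
  have hYb : Integrable (fun ω => H1 ω * b (X ω) + H3 ω) μ := hint6.add hint8
  -- zero integrals from the conditional moment restrictions
  have hz1 : ∀ (φ : (Fin d → ℝ) → ℝ), Measurable φ →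
      Integrable (fun ω => φ (X ω) * (H1 ω * p (X ω) + H2 ω)) μ →
      ∫ ω, φ (X ω) * (H1 ω * p (X ω) + H2 ω) ∂μ = 0 := fun φ hφ hφi =>
    key_zero μ X hX φ hφ _ hYp hφi hmp
  have hz2 : ∀ (φ : (Fin d → ℝ) → ℝ), Measurable φ →
      Integrable (fun ω => φ (X ω) * (H1 ω * b (X ω) + H3 ω)) μ →
      ∫ ω, φ (X ω) * (H1 ω * b (X ω) + H3 ω) ∂μ = 0 := fun φ hφ hφi =>
    key_zero μ X hX φ hφ _ hYb hφi hmb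
  -- set membership facts
  have hbb : b ∈ ({b, bs} : Set ((Fin d → ℝ) → ℝ)) := Or.inl rfl
  have hbsb : bs ∈ ({b, bs} : Set ((Fin d → ℝ) → ℝ)) := Or.inr rfl
  have hpp : p ∈ ({p, ps} : Set ((Fin d → ℝ) → ℝ)) := Or.inl rfl
  have hpsp : ps ∈ ({p, ps} : Set ((Fin d → ℝ) → ℝ)) := Or.inr rfl
  -- integrability of cross terms
  have hIbsYp : Integrable (fun ω => (bs (X ω) - b (X ω)) * (H1 ω * p (X ω) + H2 ω)) μ := by
    have h := ((((hint1 bs hbsb p hpp).add (hint2 bs hbsb)).sub (hint1 b hbb p hpp)).sub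
      (hint2 b hbb))
    exact h.congr (by filter_upwards with ω; simp only [Pi.add_apply, Pi.sub_apply, Pi.neg_apply]; ring)
  have hIpsYb : Integrable (fun ω => (ps (X ω) - p (X ω)) * (H1 ω * b (X ω) + H3 ω)) μ := by
    have h := ((((hint1 b hbb ps hpsp).add (hint3 ps hpsp)).sub (hint1 b hbb p hpp)).sub
      (hint3 p hpp))
    exact h.congr (by filter_upwards with ω; simp only [Pi.add_apply, Pi.sub_apply, Pi.neg_apply]; ring)
  have hIbspsYp : Integrable (fun ω => (bs (X ω) - b (X ω)) *
      (H1 ω * ps (X ω) + H2 ω)) μ := by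
    have h := ((((hint1 bs hbsb ps hpsp).add (hint2 bs hbsb)).sub (hint1 b hbb ps hpsp)).sub
      (hint2 b hbb))
    exact h.congr (by filter_upwards with ω; simp only [Pi.add_apply, Pi.sub_apply, Pi.neg_apply]; ring)
  have hz1b : ∫ ω, (bs (X ω) - b (X ω)) * (H1 ω * p (X ω) + H2 ω) ∂μ = 0 :=
    hz1 (bs - b) (hbs.sub hb) (hIbsYp.congr (by filter_upwards with ω; simp))
  have hz2p : ∫ ω, (ps (X ω) - p (X ω)) * (H1 ω * b (X ω) + H3 ω) ∂μ = 0 :=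
    hz2 (ps - p) (hps.sub hp) (hIpsYb.congr (by filter_upwards with ω; simp))
  -- integrability of full H(b',p') terms
  have hI : ∀ b' ∈ ({b, bs} : Set ((Fin d → ℝ) → ℝ)), ∀ p' ∈ ({p, ps} : Set ((Fin d → ℝ) → ℝ)),
      Integrable (fun ω => b' (X ω) * p' (X ω) * H1 ω + b' (X ω) * H2 ω +
        p' (X ω) * H3 ω + H4 ω) μ := fun b' hb' p' hp' =>
    (((hint1 b' hb' p' hp').add (hint2 b' hb')).add (hint3 p' hp')).add hint4
  -- |H1| = eps * H1 relation: eps * |H1| = H1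
  have habs : ∀ ω, H1 ω = eps * |H1 ω| := by
    intro ω
    rcases heps with ⟨he, hpos⟩ | ⟨he, hneg⟩
    · rw [he, abs_of_nonneg (hpos ω)]; ring
    · rw [he, abs_of_nonpos (hneg ω)]; ring
  -- the main term
  have hT0 : Integrable (fun ω => (b (X ω) - bs (X ω)) * (p (X ω) - ps (X ω)) * H1 ω) μ := by
    have h := ((((hint1 b hbb p hpp).sub (hint1 b hbb ps hpsp)).sub
      (hint1 bs hbsb p hpp)).add (hint1 bs hbsb ps hpsp))
    exact h.congr (by filter_upwards with ω; simp only [Pi.add_apply, Pi.sub_apply, Pi.neg_apply]; ring)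
  have hT0eq : ∫ ω, (b (X ω) - bs (X ω)) * (p (X ω) - ps (X ω)) * H1 ω ∂μ =
      eps * ∫ ω, (b (X ω) - bs (X ω)) * (p (X ω) - ps (X ω)) * |H1 ω| ∂μ := by
    rw [← integral_const_mul]
    apply integral_congr_ae
    filter_upwards with ω
    rcases heps with ⟨he, hpos⟩ | ⟨he, hneg⟩
    · rw [he, abs_of_nonneg (hpos ω)]; ring
    · rw [he, abs_of_nonpos (hneg ω)]; ring
  refine ⟨?_, ?_, ?_⟩
  · -- first conjunct
    rw [← integral_sub (hI bs hbsb ps hpsp) (hI b hbb p hpp)]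
    have hsplit : ∫ ω, ((bs (X ω) * ps (X ω) * H1 ω + bs (X ω) * H2 ω + ps (X ω) * H3 ω + H4 ω)
        - (b (X ω) * p (X ω) * H1 ω + b (X ω) * H2 ω + p (X ω) * H3 ω + H4 ω)) ∂μ =
        (∫ ω, (b (X ω) - bs (X ω)) * (p (X ω) - ps (X ω)) * H1 ω ∂μ) +
        (∫ ω, (bs (X ω) - b (X ω)) * (H1 ω * p (X ω) + H2 ω) ∂μ) +
        (∫ ω, (ps (X ω) - p (X ω)) * (H1 ω * b (X ω) + H3 ω) ∂μ) := by
      have e1 : ∫ ω, ((bs (X ω) * ps (X ω) * H1 ω + bs (X ω) * H2 ω + ps (X ω) * H3 ω + H4 ω)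
          - (b (X ω) * p (X ω) * H1 ω + b (X ω) * H2 ω + p (X ω) * H3 ω + H4 ω)) ∂μ =
          ∫ ω, (((b (X ω) - bs (X ω)) * (p (X ω) - ps (X ω)) * H1 ω +
            (bs (X ω) - b (X ω)) * (H1 ω * p (X ω) + H2 ω)) +
            (ps (X ω) - p (X ω)) * (H1 ω * b (X ω) + H3 ω)) ∂μ :=
        integral_congr_ae (by filter_upwards with ω; ring)
      have hTT : Integrable (fun ω => (b (X ω) - bs (X ω)) * (p (X ω) - ps (X ω)) * H1 ω +
          (bs (X ω) - b (X ω)) * (H1 ω * p (X ω) + H2 ω)) μ := hT0.add hIbsYp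
      rw [e1, integral_add hTT hIpsYb, integral_add hT0 hIbsYp]
    rw [hsplit, hz1b, hz2p, add_zero, add_zero, hT0eq]
  · -- second conjunct
    rw [← sub_eq_zero, ← integral_sub (hI bs hbsb p hpp) (hI b hbb p hpp)]
    rw [← hz1b]
    apply integral_congr_ae
    filter_upwards with ω
    ring
  · -- third conjunct
    rw [← sub_eq_zero, ← integral_sub (hI b hbb ps hpsp) (hI b hbb p hpp)]
    rw [← hz2p]
    apply integral_congr_ae
    filter_upwards with ω
    ring
end
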